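/- arXiv:1704.05198 — 2 statements merged into one kernel-verified Lean document; each statement's English description precedes it below -/
import Mathlib

section
/- For every n ≥ 1 and every 0 < λ ≤ Λ there exists a constant C_6 = C_6(n, λ, Λ) > 0 such that for every real n×n matrix A with λ ≤ det A ≤ Λ, one has |1 − det A| ≤ C_6 · K(A) · dist(A, SL(n)). -/
/-!
The determinant is locally Lipschitz: if all entries of `A` and `B` are bounded by `M` and those
of `A - B` by `t`, then `|det A - det B| ≤ n! * n * M ^ (n - 1) * t`. Since `det A ≤ n! * |A| ^ n`,
the bound `λ ≤ det A` forces `|A| ≥ r := min 1 (λ / n!)` and `K(A) ≥ 1 / n!`. Let `B ∈ SL(n)` and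
`t = |A - B|`. If `t ≥ |A|`, then `K(A) * t ≥ r / n!` while `|1 - det A| ≤ 1 + Λ`. If `t < |A|`,
all entries of `A` and `B` are bounded by `2|A|`, and the Lipschitz bound together with
`|A| ^ n = K(A) * det A ≤ Λ * K(A)` gives `|1 - det A| ≤ n! * n * 2 ^ n * Λ / r * K(A) * t`.
-/

open Matrix

noncomputable section

/-- Frobenius norm of a real square matrix. -/
def frob {ι : Type*} [Fintype ι] (A : Matrix ι ι ℝ) : ℝ :=
  Real.sqrt (∑ i, ∑ j, (A i j) ^ 2)

/-- Frobenius distance from a matrix to `SL(n)`. -/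
def distSL {n : ℕ} (A : Matrix (Fin n) (Fin n) ℝ) : ℝ :=
  sInf {r : ℝ | ∃ B : Matrix (Fin n) (Fin n) ℝ, B.det = 1 ∧ r = frob (A - B)}

/-- The distortion `K(A) = |A|^n / det A` of a matrix (Frobenius norm). -/
def Kdist {n : ℕ} (A : Matrix (Fin n) (Fin n) ℝ) : ℝ :=
  frob A ^ n / A.det

open Finset Equiv
open scoped Nat

lemma abs_prod_sub_prod_le {ι : Type*} [Fintype ι] {f g : ι → ℝ} {M t : ℝ} (hM : 0 ≤ M)
    (ht : 0 ≤ t) (hf : ∀ i, |f i| ≤ M) (hg : ∀ i, |g i| ≤ M) (hfg : ∀ i, |f i - g i| ≤ t) :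
    |∏ i, f i - ∏ i, g i| ≤ Fintype.card ι * M ^ (Fintype.card ι - 1) * t := by
  have h := (ContinuousMultilinearMap.mkPiAlgebra ℝ ι ℝ).norm_image_sub_le f g
  simp only [ContinuousMultilinearMap.mkPiAlgebra_apply, ContinuousMultilinearMap.norm_mkPiAlgebra,
    one_mul, Real.norm_eq_abs] at h
  refine h.trans ?_
  gcongr
  · exact max_le ((pi_norm_le_iff_of_nonneg hM).2 hf) ((pi_norm_le_iff_of_nonneg hM).2 hg)
  · exact (pi_norm_le_iff_of_nonneg ht).2 hfg

lemma abs_det_sub_det_le {ι : Type*} [Fintype ι] [DecidableEq ι] {A B : Matrix ι ι ℝ} {M t : ℝ}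
    (hM : 0 ≤ M) (ht : 0 ≤ t) (hA : ∀ i j, |A i j| ≤ M) (hB : ∀ i j, |B i j| ≤ M)
    (hAB : ∀ i j, |A i j - B i j| ≤ t) :
    |A.det - B.det| ≤ (Fintype.card ι)! * (Fintype.card ι * M ^ (Fintype.card ι - 1) * t) := by
  rw [det_apply', det_apply', ← sum_sub_distrib]
  calc |∑ σ : Perm ι, (((Perm.sign σ : ℤ) : ℝ) * ∏ i, A (σ i) i
          - ((Perm.sign σ : ℤ) : ℝ) * ∏ i, B (σ i) i)|
      ≤ ∑ σ : Perm ι, |∏ i, A (σ i) i - ∏ i, B (σ i) i| := by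
        refine (abs_sum_le_sum_abs _ _).trans (sum_le_sum fun σ _ => ?_)
        simp [← mul_sub, abs_mul, ← Int.cast_abs]
    _ ≤ ∑ _σ : Perm ι, Fintype.card ι * M ^ (Fintype.card ι - 1) * t :=
        sum_le_sum fun σ _ => abs_prod_sub_prod_le hM ht (fun i => hA _ _) (fun i => hB _ _)
          (fun i => hAB _ _)
    _ = _ := by simp [Fintype.card_perm]

lemma abs_apply_le_frob {ι : Type*} [Fintype ι] (A : Matrix ι ι ℝ) (i j : ι) :
    |A i j| ≤ frob A := by
  refine Real.abs_le_sqrt ?_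
  calc A i j ^ 2 ≤ ∑ j', A i j' ^ 2 :=
        single_le_sum (f := fun j' => A i j' ^ 2) (fun _ _ => sq_nonneg _) (mem_univ j)
    _ ≤ ∑ i', ∑ j', A i' j' ^ 2 :=
        single_le_sum (f := fun i' => ∑ j', A i' j' ^ 2)
          (fun _ _ => sum_nonneg fun _ _ => sq_nonneg _) (mem_univ i)

lemma det_le_factorial_mul_frob_pow {ι : Type*} [Fintype ι] [DecidableEq ι] (A : Matrix ι ι ℝ) :
    A.det ≤ (Fintype.card ι)! * frob A ^ Fintype.card ι := by
  have h := det_le (abv := AbsoluteValue.abs) (abs_apply_le_frob A)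
  rw [nsmul_eq_mul] at h
  exact (le_abs_self _).trans h

lemma min_one_le_frob {n : ℕ} (hn : n ≠ 0) {A : Matrix (Fin n) (Fin n) ℝ} {c : ℝ}
    (hc : c ≤ A.det) : min 1 (c / n !) ≤ frob A := by
  have hdet := det_le_factorial_mul_frob_pow A
  rw [Fintype.card_fin] at hdet
  rcases le_or_gt 1 (frob A) with h1 | h1
  · exact min_le_of_left_le h1
  · refine min_le_of_right_le ?_
    calc c / n ! ≤ frob A ^ n := by rw [div_le_iff₀' (by positivity)]; linarith
      _ ≤ frob A := pow_le_of_le_one (Real.sqrt_nonneg _) h1.le hn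

lemma inv_factorial_le_Kdist {n : ℕ} {A : Matrix (Fin n) (Fin n) ℝ} (hA : 0 < A.det) :
    (n ! : ℝ)⁻¹ ≤ Kdist A := by
  have hdet := det_le_factorial_mul_frob_pow A
  rw [Fintype.card_fin] at hdet
  rw [Kdist, le_div_iff₀ hA, inv_mul_le_iff₀ (by positivity)]
  exact hdet

lemma Kdist_pos {n : ℕ} {A : Matrix (Fin n) (Fin n) ℝ} (hA : 0 < A.det) : 0 < Kdist A :=
  (inv_factorial_le_Kdist hA).trans_lt' (by positivity)

lemma le_distSL {n : ℕ} {A : Matrix (Fin n) (Fin n) ℝ} {c : ℝ}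
    (h : ∀ B : Matrix (Fin n) (Fin n) ℝ, B.det = 1 → c ≤ frob (A - B)) : c ≤ distSL A :=
  le_csInf ⟨_, 1, det_one, rfl⟩ (by rintro _ ⟨B, hB, rfl⟩; exact h B hB)

def detDefectConst (n : ℕ) (lam Lam : ℝ) : ℝ :=
  n ! * n * 2 ^ n * (1 + Lam) / min 1 (lam / n !)

lemma detDefectConst_pos {n : ℕ} (hn : n ≠ 0) {lam Lam : ℝ} (hlam : 0 < lam) (hLam : 0 ≤ Lam) :
    0 < detDefectConst n lam Lam := by
  have : 0 < min 1 (lam / n !) := lt_min one_pos (by positivity)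
  unfold detDefectConst
  positivity

section

variable {n : ℕ} {lam Lam : ℝ} {A B : Matrix (Fin n) (Fin n) ℝ}

lemma abs_one_sub_det_le_of_frob_le (hn : n ≠ 0) (hlam : 0 < lam) (hlA : lam ≤ A.det)
    (hAL : A.det ≤ Lam) (h : frob A ≤ frob (A - B)) :
    |1 - A.det| ≤ detDefectConst n lam Lam * Kdist A * frob (A - B) := by
  have hr : 0 < min 1 (lam / n !) := lt_min one_pos (by positivity)
  have hK := inv_factorial_le_Kdist (hlam.trans_le hlA)
  have hK0 := Kdist_pos (hlam.trans_le hlA)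
  have hn1 : (1 : ℝ) ≤ n * 2 ^ n :=
    one_le_mul_of_one_le_of_one_le (by exact_mod_cast Nat.one_le_iff_ne_zero.2 hn)
      (one_le_pow₀ one_le_two)
  calc |1 - A.det| ≤ 1 + Lam := abs_le.2 ⟨by linarith, by linarith⟩
    _ ≤ n * 2 ^ n * (1 + Lam) := le_mul_of_one_le_left (by linarith) hn1
    _ = detDefectConst n lam Lam * ((n ! : ℝ)⁻¹ * min 1 (lam / n !)) := by
        unfold detDefectConst; field_simp
    _ ≤ detDefectConst n lam Lam * (Kdist A * frob (A - B)) := by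
        refine mul_le_mul_of_nonneg_left (mul_le_mul hK ?_ hr.le hK0.le)
          (detDefectConst_pos hn hlam (by linarith)).le
        exact (min_one_le_frob hn hlA).trans h
    _ = detDefectConst n lam Lam * Kdist A * frob (A - B) := (mul_assoc _ _ _).symm

lemma abs_one_sub_det_le_of_frob_sub_lt (hn : n ≠ 0) (hlam : 0 < lam) (hlA : lam ≤ A.det)
    (hAL : A.det ≤ Lam) (hB : B.det = 1) (h : frob (A - B) < frob A) :
    |1 - A.det| ≤ detDefectConst n lam Lam * Kdist A * frob (A - B) := by
  set r := min 1 (lam / n !)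
  set a := frob A
  set t := frob (A - B)
  have hr : 0 < r := lt_min one_pos (by positivity)
  have hra : r ≤ a := min_one_le_frob hn hlA
  have hA : 0 < A.det := hlam.trans_le hlA
  have ht : 0 ≤ t := Real.sqrt_nonneg _
  have hAB : ∀ i j, |A i j - B i j| ≤ t := abs_apply_le_frob (A - B)
  have hAij : ∀ i j, |A i j| ≤ 2 * a := fun i j => by linarith [abs_apply_le_frob A i j]
  have hBij : ∀ i j, |B i j| ≤ 2 * a := fun i j => by
    have hBA := abs_sub_abs_le_abs_sub (B i j) (A i j)
    rw [abs_sub_comm] at hBA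
    linarith [abs_apply_le_frob A i j, hAB i j]
  have hdiff := abs_det_sub_det_le (by linarith) ht hAij hBij hAB
  rw [hB, abs_sub_comm, Fintype.card_fin] at hdiff
  calc |1 - A.det| ≤ n ! * (n * (2 * a) ^ (n - 1) * t) := hdiff
    _ ≤ n ! * (n * ((2 * a) ^ n / r) * t) := by
        gcongr
        rw [le_div_iff₀ hr, ← pow_sub_one_mul hn]
        exact mul_le_mul_of_nonneg_left (by linarith) (pow_nonneg (by linarith) _)
    _ = n ! * n * 2 ^ n / r * (Kdist A * A.det) * t := by
        rw [Kdist, div_mul_cancel₀ _ hA.ne', mul_pow]; ring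
    _ ≤ n ! * n * 2 ^ n / r * (Kdist A * (1 + Lam)) * t := by
        have hK := Kdist_pos hA
        gcongr
        linarith
    _ = detDefectConst n lam Lam * Kdist A * t := by unfold detDefectConst; ring

lemma abs_one_sub_det_le (hn : n ≠ 0) (hlam : 0 < lam) (hlA : lam ≤ A.det) (hAL : A.det ≤ Lam)
    (hB : B.det = 1) : |1 - A.det| ≤ detDefectConst n lam Lam * Kdist A * frob (A - B) := by
  rcases le_or_gt (frob A) (frob (A - B)) with h | h
  · exact abs_one_sub_det_le_of_frob_le hn hlam hlA hAL h
  · exact abs_one_sub_det_le_of_frob_sub_lt hn hlam hlA hAL hB h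

end

theorem stmt_11 (n : ℕ) (hn : 1 ≤ n) (lam Lam : ℝ) (hlam : 0 < lam) (hlL : lam ≤ Lam) :
    ∃ C₆ : ℝ, 0 < C₆ ∧
      ∀ A : Matrix (Fin n) (Fin n) ℝ, lam ≤ A.det → A.det ≤ Lam →
        |1 - A.det| ≤ C₆ * Kdist A * distSL A := by
  have hn0 : n ≠ 0 := Nat.one_le_iff_ne_zero.1 hn
  have hC := detDefectConst_pos hn0 hlam (hlam.le.trans hlL)
  refine ⟨detDefectConst n lam Lam, hC, fun A hlA hAL => ?_⟩
  have hK := Kdist_pos (hlam.trans_le hlA)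
  rw [← div_le_iff₀' (mul_pos hC hK)]
  exact le_distSL fun B hB =>
    (div_le_iff₀' (mul_pos hC hK)).2 (abs_one_sub_det_le hn0 hlam hlA hAL hB)

end
end

section
/- For every n ≥ 1 and every real 2n×2n matrix A, the Frobenius distance from A to sp(2n) satisfies dist(A, sp(2n)) = (1/2) |J A − (J A)ᵀ|. -/
/-!
Left multiplication by `J` permutes the rows of a matrix up to sign, so it is a Frobenius
isometry, and it maps `sp(2n)` onto the symmetric matrices (with inverse `S ↦ -J S`). Hence the
distance from `A` to `sp(2n)` is the distance from `Y = J A` to the symmetric matrices. For `S`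
symmetric, `Y - Yᵀ = (Y - S) - (Y - S)ᵀ`, so `|Y - Yᵀ| ≤ 2 |Y - S|`, with equality at the
symmetric part `S = (Y + Yᵀ) / 2`.
-/

open Matrix

noncomputable section

attribute [local instance] Matrix.frobeniusNormedAddCommGroup Matrix.frobeniusNormedSpace

namespace Matrix

section J

variable {l m R : Type*} [Fintype l] [DecidableEq l]

@[simp]
theorem J_mul_apply_inl [CommRing R] (X : Matrix (l ⊕ l) m R) (i : l) (j : m) :
    (J l R * X) (Sum.inl i) j = -X (Sum.inr i) j := by
  simp [J, mul_apply, Fintype.sum_sum_type, one_apply]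

@[simp]
theorem J_mul_apply_inr [CommRing R] (X : Matrix (l ⊕ l) m R) (i : l) (j : m) :
    (J l R * X) (Sum.inr i) j = X (Sum.inl i) j := by
  simp [J, mul_apply, Fintype.sum_sum_type, one_apply]

theorem J_mul_neg_J_mul [CommRing R] (X : Matrix (l ⊕ l) m R) : J l R * -(J l R * X) = X := by
  rw [Matrix.mul_neg, ← Matrix.mul_assoc, J_squared, Matrix.neg_mul, Matrix.one_mul, neg_neg]

theorem frobenius_norm_J_mul [Fintype m] [NormedCommRing R] (X : Matrix (l ⊕ l) m R) :
    ‖J l R * X‖ = ‖X‖ := by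
  simp only [frobenius_norm_def, Fintype.sum_sum_type, J_mul_apply_inl, J_mul_apply_inr,
    norm_neg, add_comm]

end J

theorem frobenius_norm_sub_transpose_le {m α : Type*} [Fintype m] [NormedAddCommGroup α]
    (Y : Matrix m m α) {S : Matrix m m α} (hS : S.IsSymm) : ‖Y - Yᵀ‖ ≤ 2 * ‖Y - S‖ :=
  calc ‖Y - Yᵀ‖ = ‖(Y - S) - (Y - S)ᵀ‖ := by rw [transpose_sub, hS.eq, sub_sub_sub_cancel_right]
    _ ≤ ‖Y - S‖ + ‖(Y - S)ᵀ‖ := norm_sub_le _ _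
    _ = 2 * ‖Y - S‖ := by rw [frobenius_norm_transpose, two_mul]

theorem frobenius_norm_sub_symmPart {m 𝕜 : Type*} [Fintype m] [RCLike 𝕜] (Y : Matrix m m 𝕜) :
    ‖Y - (2⁻¹ : 𝕜) • (Y + Yᵀ)‖ = ‖Y - Yᵀ‖ / 2 := by
  rw [show Y - (2⁻¹ : 𝕜) • (Y + Yᵀ) = (2⁻¹ : 𝕜) • (Y - Yᵀ) by module, norm_smul]
  simp [div_eq_inv_mul]

end Matrix

theorem frob_eq_norm {ι : Type*} [Fintype ι] (A : Matrix ι ι ℝ) : frob A = ‖A‖ := by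
  simp only [frob, frobenius_norm_def, Real.sqrt_eq_rpow, Real.rpow_two, Real.norm_eq_abs, sq_abs]

theorem stmt_19_general (n : ℕ) (A : Matrix (Fin n ⊕ Fin n) (Fin n ⊕ Fin n) ℝ) :
    sInf {r : ℝ | ∃ B : Matrix (Fin n ⊕ Fin n) (Fin n ⊕ Fin n) ℝ,
        Matrix.J (Fin n) ℝ * B = (Matrix.J (Fin n) ℝ * B)ᵀ ∧ r = frob (A - B)} =
      (1 / 2) * frob (Matrix.J (Fin n) ℝ * A - (Matrix.J (Fin n) ℝ * A)ᵀ) := by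
  set Y := J (Fin n) ℝ * A
  have frob_sub_eq (B : Matrix (Fin n ⊕ Fin n) (Fin n ⊕ Fin n) ℝ) :
      frob (A - B) = ‖Y - J (Fin n) ℝ * B‖ := by
    rw [frob_eq_norm, ← frobenius_norm_J_mul, Matrix.mul_sub]
  set S := (2⁻¹ : ℝ) • (Y + Yᵀ)
  have hS : S.IsSymm := (isSymm_add_transpose_self Y).smul _
  rw [frob_eq_norm]
  refine IsLeast.csInf_eq ⟨⟨-(J (Fin n) ℝ * S), ?_, ?_⟩, ?_⟩
  · rw [J_mul_neg_J_mul, hS.eq]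
  · rw [frob_sub_eq, J_mul_neg_J_mul, frobenius_norm_sub_symmPart]
    ring
  · rintro r ⟨B, hB, rfl⟩
    rw [frob_sub_eq]
    linarith [frobenius_norm_sub_transpose_le Y (S := J (Fin n) ℝ * B) hB.symm]

theorem stmt_19 (n : ℕ) (hn : 1 ≤ n) (A : Matrix (Fin n ⊕ Fin n) (Fin n ⊕ Fin n) ℝ) :
    sInf {r : ℝ | ∃ B : Matrix (Fin n ⊕ Fin n) (Fin n ⊕ Fin n) ℝ,
        Matrix.J (Fin n) ℝ * B = (Matrix.J (Fin n) ℝ * B)ᵀ ∧ r = frob (A - B)} =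
      (1 / 2) * frob (Matrix.J (Fin n) ℝ * A - (Matrix.J (Fin n) ℝ * A)ᵀ) :=
  stmt_19_general n A

end
end
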